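/- Let P_0 be an arbitrary real symmetric n×n matrix. Then the matrix-valued function P^0(t) := Σ_{i=1}^{n} Σ_{j=1}^{n} { e^{(λ_i+λ̄_j)t} · R_i P_0 R_j^† }_H satisfies P^0(0) = P_0 and, for every t ∈ ℝ, P^0 is differentiable at t with derivative P^0{}'(t) = A_C P^0(t) + P^0(t) A_C^T (i.e., P^0 solves the homogeneous differential Lyapunov equation with initial condition P_0). -/

import Mathlib

open Matrix Finset

noncomputable section

/-- `N(s) = s^n + ∑_{k<n} a_k s^k`, the characteristic polynomial as a function. -/
def Npoly (n : ℕ) (a : Fin n → ℝ) : ℂ → ℂ :=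
  fun s => s ^ n + ∑ k : Fin n, (a k : ℂ) * s ^ (k : ℕ)

/-- The companion matrix `A_C` (over `ℂ`, with real entries). -/
def Acomp (n : ℕ) (a : Fin n → ℝ) : Matrix (Fin n) (Fin n) ℂ :=
  Matrix.of fun μ ν =>
    if (μ : ℕ) + 1 = n then -(a ν : ℂ)
    else if (ν : ℕ) = (μ : ℕ) + 1 then 1 else 0

/-- The right eigenvector `x_i`, `(x_i)_μ = λ_i^{μ-1}` (0-based: `λ_i^μ`). -/
def xvec (n : ℕ) (lam : Fin n → ℂ) (i : Fin n) : Fin n → ℂ :=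
  fun μ => lam i ^ (μ : ℕ)

/-- The left eigenvector `y_i`, `(y_i)_μ = -∑_{k=μ}^{n} a_k λ_i^{k-μ}` (1-based indices,
with `a_n = 1`). -/
def yvec (n : ℕ) (a : Fin n → ℝ) (lam : Fin n → ℂ) (i : Fin n) : Fin n → ℂ :=
  fun μ => -(lam i ^ (n - 1 - (μ : ℕ)) +
    ∑ k : Fin n, if (μ : ℕ) < (k : ℕ) then (a k : ℂ) * lam i ^ ((k : ℕ) - (μ : ℕ) - 1) else 0)

/-- The residue matrix `R_i = x_i y_i^T / (-N'(λ_i))`. -/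
def Rres (n : ℕ) (a : Fin n → ℝ) (lam : Fin n → ℂ) (i : Fin n) :
    Matrix (Fin n) (Fin n) ℂ :=
  (-(deriv (Npoly n a) (lam i)))⁻¹ • Matrix.vecMulVec (xvec n lam i) (yvec n a lam i)

/-- `J = diag((-1)^1, …, (-1)^n)`. -/
def Jmat (n : ℕ) : Matrix (Fin n) (Fin n) ℂ :=
  Matrix.diagonal fun μ => (-1 : ℂ) ^ ((μ : ℕ) + 1)

/-- Hermitian part `{M}_H = (M + Mᴴ)/2`. -/
def hermPart {m : Type*} [Fintype m] (M : Matrix m m ℂ) : Matrix m m ℂ :=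
  (2 : ℂ)⁻¹ • (M + Mᴴ)

/-- The last standard basis vector `e_n`. -/
def evec (n : ℕ) : Fin n → ℂ := fun μ => if (μ : ℕ) = n - 1 then 1 else 0

/-!
Pairing `yᵢ` with the power vector `(sᵘ)ᵤ` gives `-(N(s) - N(λᵢ)) / (s - λᵢ)` (a sum of geometric
sums), so `yᵢ ⬝ᵥ xⱼ = 0` for `i ≠ j` and `yᵢ ⬝ᵥ xᵢ = -N'(λᵢ)`. Thus the rows `yᵢ / (-N'(λᵢ))` form
a left inverse `W` of `X = (x₁ ⋯ xₙ)`, hence also a right inverse, and `∑ Rᵢ = X W = 1`;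
moreover `A_C Rᵢ = λᵢ Rᵢ`. Since `Bᵢⱼ = Rᵢ P₀ Rⱼᴴ` satisfies `Bᵢⱼᴴ = Bⱼᵢ`, the Hermitian part can
be dropped from the double sum, `P(t) = ∑ e^{(λᵢ+λ̄ⱼ)t} Bᵢⱼ`. At `t = 0` this is
`(∑ Rᵢ) P₀ (∑ Rⱼ)ᴴ = P₀`, and differentiating termwise gives
`(λᵢ + λ̄ⱼ) Bᵢⱼ = A_C Bᵢⱼ + Bᵢⱼ A_Cᵀ`.
-/

theorem Matrix.sum_vecMulVec_eq_one {ι K : Type*} [Fintype ι] [DecidableEq ι] [CommRing K]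
    (x w : ι → ι → K) (h : ∀ i j, w i ⬝ᵥ x j = if i = j then 1 else 0) :
    ∑ i, vecMulVec (x i) (w i) = 1 := by
  have hWX : Matrix.of w * (Matrix.of x)ᵀ = 1 := by
    ext i j
    simpa [mul_apply, one_apply, dotProduct] using h i j
  calc ∑ i, vecMulVec (x i) (w i) = (Matrix.of x)ᵀ * Matrix.of w := by
        ext μ ν
        simp [mul_apply, vecMulVec_apply, sum_apply]
    _ = 1 := mul_eq_one_comm.mp hWX

theorem sum_sum_hermPart_of_conjTranspose_eq {m ι : Type*} [Fintype m] [Fintype ι]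
    (M : ι → ι → Matrix m m ℂ) (h : ∀ i j, (M i j)ᴴ = M j i) :
    ∑ i, ∑ j, hermPart (M i j) = ∑ i, ∑ j, M i j := by
  simp only [hermPart, ← smul_sum, sum_add_distrib, h]
  rw [sum_comm (f := fun i j => M j i), ← two_smul ℂ, smul_smul, inv_mul_cancel₀ two_ne_zero,
    one_smul]

theorem Fin.sum_univ_ite_lt_eq_sum_range {M : Type*} [AddCommMonoid M] {n k : ℕ} (hk : k ≤ n)
    (f : ℕ → M) :
    ∑ μ : Fin n, (if (μ : ℕ) < k then f μ else 0) = ∑ μ ∈ range k, f μ := by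
  rw [Fin.sum_univ_eq_sum_range (fun μ => if μ < k then f μ else 0), ← sum_filter]
  congr 1
  ext μ
  simp only [mem_filter, mem_range]
  omega

theorem hasDerivAt_Npoly (n : ℕ) (a : Fin n → ℝ) (s : ℂ) :
    HasDerivAt (Npoly n a)
      (n * s ^ (n - 1) + ∑ k : Fin n, (a k : ℂ) * ((k : ℕ) * s ^ ((k : ℕ) - 1))) s :=
  (hasDerivAt_pow n s).add (HasDerivAt.fun_sum fun k _ => (hasDerivAt_pow (k : ℕ) s).const_mul _)

theorem Acomp_mulVec_xvec {n : ℕ} {a : Fin n → ℝ} {lam : Fin n → ℂ} {i : Fin n}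
    (hroot : Npoly n a (lam i) = 0) :
    Acomp n a *ᵥ xvec n lam i = lam i • xvec n lam i := by
  funext μ
  simp only [mulVec, dotProduct, Acomp, xvec, of_apply, Pi.smul_apply, smul_eq_mul]
  by_cases hμ : (μ : ℕ) + 1 = n
  · have hN : lam i ^ n + ∑ k : Fin n, (a k : ℂ) * lam i ^ (k : ℕ) = 0 := hroot
    simp only [if_pos hμ, neg_mul, sum_neg_distrib]
    rw [← pow_succ', hμ]
    linear_combination -hN
  · have hlt : (μ : ℕ) + 1 < n := by omega
    simp only [if_neg hμ, ite_mul, one_mul, zero_mul]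
    rw [sum_eq_single_of_mem ⟨(μ : ℕ) + 1, hlt⟩ (mem_univ _)
      (fun ν _ hν => if_neg fun h => hν (Fin.ext h)), if_pos rfl, pow_succ']

theorem Acomp_conjTranspose (n : ℕ) (a : Fin n → ℝ) : (Acomp n a)ᴴ = (Acomp n a)ᵀ := by
  ext μ ν
  simp only [conjTranspose_apply, transpose_apply, Acomp, of_apply]
  split_ifs <;> simp

theorem yvec_dotProduct_powers {n : ℕ} (a : Fin n → ℝ) (lam : Fin n → ℂ) (i : Fin n) (s : ℂ) :
    yvec n a lam i ⬝ᵥ (fun μ : Fin n => s ^ (μ : ℕ)) =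
      -(∑ μ ∈ range n, s ^ μ * lam i ^ (n - 1 - μ) +
        ∑ k : Fin n, (a k : ℂ) * ∑ μ ∈ range k, s ^ μ * lam i ^ ((k : ℕ) - 1 - μ)) := by
  simp only [dotProduct, yvec, neg_mul, add_mul, sum_neg_distrib, sum_add_distrib, sum_mul,
    ite_mul, zero_mul, neg_inj]
  congr 1
  · rw [← Fin.sum_univ_eq_sum_range (fun μ => s ^ μ * lam i ^ (n - 1 - μ))]
    exact sum_congr rfl fun μ _ => mul_comm _ _
  · rw [sum_comm]
    refine sum_congr rfl fun k _ => ?_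
    rw [Fin.sum_univ_ite_lt_eq_sum_range k.isLt.le
      (fun μ => (a k : ℂ) * lam i ^ ((k : ℕ) - μ - 1) * s ^ μ), mul_sum]
    refine sum_congr rfl fun μ _ => ?_
    rw [Nat.sub_right_comm]
    ring

theorem yvec_dotProduct_xvec_mul_sub {n : ℕ} (a : Fin n → ℝ) (lam : Fin n → ℂ) (i j : Fin n) :
    (yvec n a lam i ⬝ᵥ xvec n lam j) * (lam j - lam i) =
      Npoly n a (lam i) - Npoly n a (lam j) := by
  unfold xvec
  rw [yvec_dotProduct_powers, neg_mul, add_mul, geom_sum₂_mul, sum_mul]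
  simp only [mul_assoc, geom_sum₂_mul]
  simp only [Npoly, mul_sub, sum_sub_distrib]
  ring

theorem yvec_dotProduct_xvec_self {n : ℕ} (a : Fin n → ℝ) (lam : Fin n → ℂ) (i : Fin n) :
    yvec n a lam i ⬝ᵥ xvec n lam i = -deriv (Npoly n a) (lam i) := by
  unfold xvec
  rw [(hasDerivAt_Npoly n a (lam i)).deriv, yvec_dotProduct_powers]
  simp only [geom_sum₂_self]

theorem yvec_dotProduct_xvec_of_ne {n : ℕ} {a : Fin n → ℝ} {lam : Fin n → ℂ} {i j : Fin n}
    (hi : Npoly n a (lam i) = 0) (hj : Npoly n a (lam j) = 0) (hij : lam i ≠ lam j) :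
    yvec n a lam i ⬝ᵥ xvec n lam j = 0 := by
  have h := yvec_dotProduct_xvec_mul_sub a lam i j
  rw [hi, hj, sub_zero] at h
  exact (mul_eq_zero.mp h).resolve_right (sub_ne_zero.mpr hij.symm)

theorem sum_Rres {n : ℕ} {a : Fin n → ℝ} {lam : Fin n → ℂ}
    (hroot : ∀ i, Npoly n a (lam i) = 0) (hdist : Function.Injective lam)
    (hNp : ∀ i, deriv (Npoly n a) (lam i) ≠ 0) :
    ∑ i, Rres n a lam i = 1 := by
  simp only [Rres, ← vecMulVec_smul]
  refine Matrix.sum_vecMulVec_eq_one _ _ fun i j => ?_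
  rw [smul_dotProduct, smul_eq_mul]
  split_ifs with h
  · rw [h, yvec_dotProduct_xvec_self, inv_mul_cancel₀ (neg_ne_zero.mpr (hNp j))]
  · rw [yvec_dotProduct_xvec_of_ne (hroot i) (hroot j) (hdist.ne h), mul_zero]

theorem Acomp_mul_Rres {n : ℕ} {a : Fin n → ℝ} {lam : Fin n → ℂ} {i : Fin n}
    (hroot : Npoly n a (lam i) = 0) :
    Acomp n a * Rres n a lam i = lam i • Rres n a lam i := by
  rw [Rres, mul_smul_comm, mul_vecMulVec, Acomp_mulVec_xvec hroot, smul_vecMulVec,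
    smul_comm]

theorem Rres_conjTranspose_mul_Acomp_transpose {n : ℕ} {a : Fin n → ℝ} {lam : Fin n → ℂ}
    {j : Fin n} (hroot : Npoly n a (lam j) = 0) :
    (Rres n a lam j)ᴴ * (Acomp n a)ᵀ = starRingEnd ℂ (lam j) • (Rres n a lam j)ᴴ := by
  rw [← Acomp_conjTranspose, ← conjTranspose_mul, Acomp_mul_Rres hroot, conjTranspose_smul]
  rfl

theorem hasDerivAt_sum_sum_cexp_smul {ι E : Type*} [Fintype ι] [NormedAddCommGroup E]
    [NormedSpace ℂ E] (κ : ι → ι → ℂ) (B : ι → ι → E) (t : ℝ) :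
    HasDerivAt (fun t : ℝ => ∑ i, ∑ j, Complex.exp (κ i j * t) • B i j)
      (∑ i, ∑ j, (Complex.exp (κ i j * t) * κ i j) • B i j) t := by
  refine HasDerivAt.fun_sum fun i _ => HasDerivAt.fun_sum fun j _ => ?_
  refine HasDerivAt.smul_const (HasDerivAt.cexp ?_) (B i j)
  simpa using (Complex.ofRealCLM.hasDerivAt (x := t)).const_mul (κ i j)

theorem mul_sum_sum_smul_add_sum_sum_smul_mul {ι K R : Type*} [Fintype ι] [CommSemiring K]
    [Semiring R] [Algebra K R] {A A' : R} {B : ι → ι → R} {μ ν : ι → K}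
    (hA : ∀ i j, A * B i j = μ i • B i j) (hA' : ∀ i j, B i j * A' = ν j • B i j) (c : ι → ι → K) :
    A * (∑ i, ∑ j, c i j • B i j) + (∑ i, ∑ j, c i j • B i j) * A' =
      ∑ i, ∑ j, (c i j * (μ i + ν j)) • B i j := by
  simp only [mul_sum, sum_mul, ← sum_add_distrib, mul_smul_comm, smul_mul_assoc, hA, hA',
    smul_smul, ← add_smul]
  congr! 3
  ring

attribute [local instance] Matrix.normedAddCommGroup Matrix.normedSpace

theorem stmt6_general (n : ℕ) (a : Fin n → ℝ) (lam : Fin n → ℂ)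
    (hroot : ∀ i, Npoly n a (lam i) = 0)
    (hdist : Function.Injective lam)
    (hNp : ∀ i, deriv (Npoly n a) (lam i) ≠ 0)
    (P0 : Matrix (Fin n) (Fin n) ℝ) (hP0 : P0ᵀ = P0)
    (P : ℝ → Matrix (Fin n) (Fin n) ℂ)
    (hP : P = fun t : ℝ => ∑ i, ∑ j, hermPart
        (Complex.exp ((lam i + (starRingEnd ℂ) (lam j)) * (t : ℂ)) •
          (Rres n a lam i * P0.map Complex.ofReal * (Rres n a lam j)ᴴ))) :
    P 0 = P0.map Complex.ofReal ∧ ∀ t : ℝ,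
      HasDerivAt P (Acomp n a * P t + P t * (Acomp n a)ᵀ) t := by
  set R := Rres n a lam
  set P0c := P0.map Complex.ofReal
  have hP0c : P0cᴴ = P0c := by
    rw [← conjTranspose_map _ fun x => by simp, conjTranspose_eq_transpose_of_trivial, hP0]
  have hP_eq : P = fun t : ℝ => ∑ i, ∑ j,
      Complex.exp ((lam i + starRingEnd ℂ (lam j)) * t) • (R i * P0c * (R j)ᴴ) := by
    refine hP.trans (funext fun t => sum_sum_hermPart_of_conjTranspose_eq _ fun i j => ?_)
    rw [conjTranspose_smul, Complex.star_def, ← Complex.exp_conj, conjTranspose_mul,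
      conjTranspose_mul, hP0c, conjTranspose_conjTranspose, Matrix.mul_assoc]
    simp [add_comm]
  subst hP_eq
  clear hP
  refine ⟨?_, fun t => ?_⟩
  · simp only [Complex.ofReal_zero, mul_zero, Complex.exp_zero, one_smul]
    calc ∑ i, ∑ j, R i * P0c * (R j)ᴴ = (∑ i, R i) * P0c * (∑ j, R j)ᴴ := by
          simp only [conjTranspose_sum, Matrix.mul_sum, Matrix.sum_mul]
          exact sum_comm
      _ = P0c := by
          rw [sum_Rres hroot hdist hNp, conjTranspose_one, Matrix.one_mul, Matrix.mul_one]
  · rw [mul_sum_sum_smul_add_sum_sum_smul_mul (fun i j => ?_) (fun i j => ?_)]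
    · exact hasDerivAt_sum_sum_cexp_smul (fun i j => lam i + starRingEnd ℂ (lam j)) _ t
    · rw [← Matrix.mul_assoc, ← Matrix.mul_assoc, Acomp_mul_Rres (hroot i), Matrix.smul_mul,
        Matrix.smul_mul]
    · rw [Matrix.mul_assoc, Rres_conjTranspose_mul_Acomp_transpose (hroot j), Matrix.mul_smul]

/-- For any real symmetric `P_0`, the function
`P⁰(t) = ∑ i j { e^{(λ_i+conj λ_j)t} R_i P_0 R_jᴴ }_H` solves the homogeneous differential
Lyapunov equation with initial condition `P_0`. -/
theorem stmt6 (n : ℕ) (hn : 0 < n) (a : Fin n → ℝ) (lam : Fin n → ℂ)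
    (hroot : ∀ i, Npoly n a (lam i) = 0)
    (hdist : Function.Injective lam)
    (hNp : ∀ i, deriv (Npoly n a) (lam i) ≠ 0)
    (P0 : Matrix (Fin n) (Fin n) ℝ) (hP0 : P0ᵀ = P0)
    (P : ℝ → Matrix (Fin n) (Fin n) ℂ)
    (hP : P = fun t : ℝ => ∑ i, ∑ j, hermPart
        (Complex.exp ((lam i + (starRingEnd ℂ) (lam j)) * (t : ℂ)) •
          (Rres n a lam i * P0.map Complex.ofReal * (Rres n a lam j)ᴴ))) :
    P 0 = P0.map Complex.ofReal ∧ ∀ t : ℝ,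
      HasDerivAt P (Acomp n a * P t + P t * (Acomp n a)ᵀ) t :=
  stmt6_general n a lam hroot hdist hNp P0 hP0 P hP

end
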